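/- For a 2×2 Jordan block A = [[λ, 1], [0, λ]] with λ < 0 and b = (b₁, 1)ᵀ, the volume of the infinite-time reachable set R_∞ = { ∫₀^∞ e^{At} b z(t) dt : |z(t)| ≤ 1 } is 4/(2|λ|³), independent of b₁. -/

import Mathlib

open MeasureTheory Matrix Set

/-- The `n×n` Jordan block with eigenvalue `λ`. -/
def jordanBlock (n : ℕ) (l : ℝ) : Matrix (Fin n) (Fin n) ℝ :=
  Matrix.of fun i j => if i = j then l else if (i : ℕ) + 1 = (j : ℕ) then 1 else 0

/-- The single-input Kalman controllability matrix `[b, Ab, …, A^{n-1}b]`. -/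
def ctrbMat1 {n : ℕ} (A : Matrix (Fin n) (Fin n) ℝ) (b : Fin n → ℝ) :
    Matrix (Fin n) (Fin n) ℝ :=
  Matrix.of fun i k => ((A ^ (k : ℕ)).mulVec b) i

/-- Infinite-time reachable set of the single-input system `ẋ = Ax + bu`, `|u| ≤ 1`. -/
noncomputable def reachInf {n : ℕ} (A : Matrix (Fin n) (Fin n) ℝ) (b : Fin n → ℝ) :
    Set (Fin n → ℝ) :=
  {x | ∃ z : ℝ → ℝ, Measurable z ∧ (∀ t, |z t| ≤ 1) ∧
    x = ∫ t in Ioi (0:ℝ), (NormedSpace.exp (t • A)).mulVec (z t • b)}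

namespace Reach2

noncomputable section

lemma exp_sq_zero (A : Matrix (Fin 2) (Fin 2) ℝ) (h : A * A = 0) :
    NormedSpace.exp A = 1 + A := by
  letI : SeminormedRing (Matrix (Fin 2) (Fin 2) ℝ) := Matrix.linftyOpSemiNormedRing
  letI : NormedRing (Matrix (Fin 2) (Fin 2) ℝ) := Matrix.linftyOpNormedRing
  letI : NormedAlgebra ℝ (Matrix (Fin 2) (Fin 2) ℝ) := Matrix.linftyOpNormedAlgebra
  rw [NormedSpace.exp_eq_tsum ℝ]
  show (∑' n : ℕ, ((n.factorial : ℝ))⁻¹ • A ^ n) = 1 + A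
  have hpow : ∀ n, 2 ≤ n → A ^ n = 0 := by
    intro n hn
    obtain ⟨k, rfl⟩ := Nat.exists_eq_add_of_le hn
    rw [pow_add, show A ^ 2 = 0 by rw [pow_two, h], zero_mul]
  rw [tsum_eq_sum (s := Finset.range 2) (fun n hn => by
    have h2 : 2 ≤ n := by simp at hn; omega
    simp [hpow n h2])]
  simp [Finset.sum_range_succ]

lemma exp_scalar (c : ℝ) :
    NormedSpace.exp (algebraMap ℝ (Matrix (Fin 2) (Fin 2) ℝ) c) = Real.exp c • 1 := by
  letI : SeminormedRing (Matrix (Fin 2) (Fin 2) ℝ) := Matrix.linftyOpSemiNormedRing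
  letI : NormedRing (Matrix (Fin 2) (Fin 2) ℝ) := Matrix.linftyOpNormedRing
  letI : NormedAlgebra ℝ (Matrix (Fin 2) (Fin 2) ℝ) := Matrix.linftyOpNormedAlgebra
  have := NormedSpace.algebraMap_exp_comm (𝔸 := Matrix (Fin 2) (Fin 2) ℝ) c
  rw [← Real.exp_eq_exp_ℝ, Algebra.algebraMap_eq_smul_one] at this
  exact this.symm

def N2 : Matrix (Fin 2) (Fin 2) ℝ := Matrix.of ![![0,1],![0,0]]

lemma exp_jordan (l t : ℝ) :
    NormedSpace.exp (t • jordanBlock 2 l) = Real.exp (t * l) • (1 + t • N2) := by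
  have hdecomp : t • jordanBlock 2 l = algebraMap ℝ (Matrix (Fin 2) (Fin 2) ℝ) (t * l) + t • N2 := by
    ext i j
    rw [Algebra.algebraMap_eq_smul_one]
    fin_cases i <;> fin_cases j <;>
      simp [jordanBlock, N2, Matrix.one_apply]
  have hcomm : Commute (algebraMap ℝ (Matrix (Fin 2) (Fin 2) ℝ) (t * l)) (t • N2) :=
    Algebra.commutes (t * l) (t • N2)
  have hsq : (t • N2) * (t • N2) = 0 := by
    rw [smul_mul_smul_comm]
    have : N2 * N2 = 0 := by
      ext i j
      fin_cases i <;> fin_cases j <;> simp [N2, Matrix.mul_apply, Fin.sum_univ_two]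
    rw [this, smul_zero]
  rw [hdecomp]
  rw [Matrix.exp_add_of_commute _ _ hcomm]
  rw [exp_scalar, exp_sq_zero _ hsq, Matrix.smul_mul, Matrix.one_mul]

lemma integrand_eq (l b₁ t zt : ℝ) :
    (NormedSpace.exp (t • jordanBlock 2 l)).mulVec (zt • ![b₁, 1]) =
      ![zt * ((b₁ + t) * Real.exp (l * t)), zt * Real.exp (l * t)] := by
  rw [exp_jordan]
  funext i
  fin_cases i <;>
    simp [Matrix.mulVec, dotProduct, Fin.sum_univ_two, N2, Matrix.one_apply,
      Matrix.add_apply, Matrix.smul_apply] <;> ring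



variable {μ : ℝ}

lemma contE : Continuous (fun t : ℝ => Real.exp (-(μ * t))) := by fun_prop

lemma integrableOn_E (hμ : 0 < μ) (a : ℝ) :
    IntegrableOn (fun t : ℝ => Real.exp (-(μ * t))) (Ioi a) := by
  simpa [neg_mul] using exp_neg_integrableOn_Ioi a hμ

lemma hasDerivAt_F0 (hμ : 0 < μ) (t : ℝ) :
    HasDerivAt (fun t : ℝ => -(Real.exp (-(μ * t)) / μ)) (Real.exp (-(μ * t))) t := by
  have h1 : HasDerivAt (fun t : ℝ => -(μ * t)) (-μ) t := by
    simpa using (hasDerivAt_id t).const_mul (-μ)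
  have h2 := h1.exp
  have h3 := (h2.div_const μ).fun_neg
  apply h3.congr_deriv
  field_simp

lemma tendsto_E_atTop (hμ : 0 < μ) :
    Filter.Tendsto (fun t : ℝ => Real.exp (-(μ * t))) Filter.atTop (nhds 0) := by
  apply Real.tendsto_exp_atBot.comp
  exact Filter.tendsto_atTop_atBot.mpr
    (fun b => ⟨-b/μ, fun a ha => by rw [div_le_iff₀ hμ] at ha; nlinarith⟩)

lemma integral_E_Ioi (hμ : 0 < μ) (a : ℝ) :
    ∫ t in Ioi a, Real.exp (-(μ * t)) = Real.exp (-(μ * a)) / μ := by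
  have := integral_Ioi_of_hasDerivAt_of_tendsto' (f := fun t : ℝ => -(Real.exp (-(μ * t)) / μ))
    (fun x _ => hasDerivAt_F0 hμ x) (integrableOn_E hμ a)
    (by simpa using ((tendsto_E_atTop hμ).div_const μ).neg)
  simpa using this

lemma tendsto_tE_atTop (hμ : 0 < μ) :
    Filter.Tendsto (fun t : ℝ => t * Real.exp (-(μ * t))) Filter.atTop (nhds 0) := by
  have h := tendsto_rpow_mul_exp_neg_mul_atTop_nhds_zero 1 μ hμ
  apply h.congr'
  filter_upwards [Filter.eventually_ge_atTop (0:ℝ)] with x hx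
  rw [Real.rpow_one, neg_mul]

lemma hasDerivAt_F1 (hμ : 0 < μ) (t : ℝ) :
    HasDerivAt (fun t : ℝ => -((t / μ + 1 / μ ^ 2) * Real.exp (-(μ * t))))
      (t * Real.exp (-(μ * t))) t := by
  have h1 : HasDerivAt (fun t : ℝ => -(μ * t)) (-μ) t := by
    simpa using (hasDerivAt_id t).const_mul (-μ)
  have h2 : HasDerivAt (fun t : ℝ => t / μ + 1 / μ ^ 2) (1 / μ) t := by
    have := ((hasDerivAt_id t).div_const μ).add_const (1 / μ ^ 2)
    simpa [one_div] using this
  have h3 := (h2.mul h1.exp).fun_neg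
  apply h3.congr_deriv
  have : Real.exp (-(μ * t)) * -μ = -(μ * Real.exp (-(μ * t))) := by ring
  field_simp
  ring

lemma tendsto_F1_atTop (hμ : 0 < μ) :
    Filter.Tendsto (fun t : ℝ => -((t / μ + 1 / μ ^ 2) * Real.exp (-(μ * t))))
      Filter.atTop (nhds 0) := by
  have h : ∀ t : ℝ, -((t / μ + 1 / μ ^ 2) * Real.exp (-(μ * t))) =
      -((1/μ) * (t * Real.exp (-(μ * t))) + (1/μ^2) * Real.exp (-(μ * t))) := by
    intro t; ring
  simp only [h]
  have := (((tendsto_tE_atTop hμ).const_mul (1/μ)).add ((tendsto_E_atTop hμ).const_mul (1/μ^2))).neg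
  simpa using this

lemma integrableOn_tE (hμ : 0 < μ) {a : ℝ} (ha : 0 ≤ a) :
    IntegrableOn (fun t : ℝ => t * Real.exp (-(μ * t))) (Ioi a) :=
  integrableOn_Ioi_deriv_of_nonneg' (fun x _ => hasDerivAt_F1 hμ x)
    (fun x hx => mul_nonneg (le_trans ha hx.le) (Real.exp_nonneg _))
    (tendsto_F1_atTop hμ)

lemma integral_tE_Ioi (hμ : 0 < μ) {a : ℝ} (ha : 0 ≤ a) :
    ∫ t in Ioi a, t * Real.exp (-(μ * t)) = (a / μ + 1 / μ ^ 2) * Real.exp (-(μ * a)) := by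
  have := integral_Ioi_of_hasDerivAt_of_tendsto' (f := fun t : ℝ => -((t / μ + 1 / μ ^ 2) * Real.exp (-(μ * t))))
    (fun x _ => hasDerivAt_F1 hμ x) (integrableOn_tE hμ ha) (tendsto_F1_atTop hμ)
  simpa using this


lemma split_Ioi {f : ℝ → ℝ} {c : ℝ} (hc : 0 ≤ c) (hf : IntegrableOn f (Ioi 0)) :
    ∫ t in Ioi 0, f t = (∫ t in Ioc 0 c, f t) + ∫ t in Ioi c, f t := by
  rw [← Ioc_union_Ioi_eq_Ioi hc]
  rw [setIntegral_union (Ioc_disjoint_Ioi le_rfl) measurableSet_Ioi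
    (hf.mono_set (by rw [← Ioc_union_Ioi_eq_Ioi hc]; exact subset_union_left))
    (hf.mono_set (by rw [← Ioc_union_Ioi_eq_Ioi hc]; exact subset_union_right))]

lemma integral_E_Ioc (hμ : 0 < μ) {c : ℝ} (hc : 0 ≤ c) :
    ∫ t in Ioc 0 c, Real.exp (-(μ * t)) = 1 / μ - Real.exp (-(μ * c)) / μ := by
  have h := split_Ioi hc (integrableOn_E hμ 0)
  rw [integral_E_Ioi hμ, integral_E_Ioi hμ] at h
  simp only [mul_zero, neg_zero, Real.exp_zero] at h
  linarith

lemma integral_tE_Ioc (hμ : 0 < μ) {c : ℝ} (hc : 0 ≤ c) :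
    ∫ t in Ioc 0 c, t * Real.exp (-(μ * t)) =
      1 / μ ^ 2 - (c / μ + 1 / μ ^ 2) * Real.exp (-(μ * c)) := by
  have h := split_Ioi hc (integrableOn_tE hμ le_rfl)
  rw [integral_tE_Ioi hμ le_rfl, integral_tE_Ioi hμ hc] at h
  simp only [mul_zero, neg_zero, Real.exp_zero, zero_div, zero_add, mul_one] at h
  linarith

lemma integrableOn_absE (hμ : 0 < μ) (c : ℝ) :
    IntegrableOn (fun t : ℝ => |t - c| * Real.exp (-(μ * t))) (Ioi 0) := by
  have hbd : ∀ t ∈ Ioi (0:ℝ), ‖|t - c| * Real.exp (-(μ * t))‖ ≤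
      t * Real.exp (-(μ * t)) + |c| * Real.exp (-(μ * t)) := by
    intro t ht
    rw [Real.norm_eq_abs, abs_mul, abs_abs, abs_of_nonneg (Real.exp_nonneg _), ← add_mul]
    apply mul_le_mul_of_nonneg_right _ (Real.exp_nonneg _)
    calc |t - c| ≤ |t| + |c| := abs_sub _ _
    _ = t + |c| := by rw [abs_of_nonneg (le_of_lt ht)]
  apply Integrable.mono' ((integrableOn_tE hμ le_rfl).add ((integrableOn_E hμ 0).const_mul |c|))
  · exact ((continuous_abs.comp (continuous_id.sub continuous_const)).mul contE).aestronglyMeasurable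
  · exact (ae_restrict_iff' measurableSet_Ioi).mpr (Filter.Eventually.of_forall hbd)

lemma integral_absE (hμ : 0 < μ) {c : ℝ} (hc : 0 ≤ c) :
    ∫ t in Ioi 0, |t - c| * Real.exp (-(μ * t)) =
      c / μ - 1 / μ ^ 2 + 2 * Real.exp (-(μ * c)) / μ ^ 2 := by
  rw [split_Ioi hc (integrableOn_absE hμ c)]
  have h1 : ∫ t in Ioc 0 c, |t - c| * Real.exp (-(μ * t)) =
      ∫ t in Ioc 0 c, (c * Real.exp (-(μ * t)) - t * Real.exp (-(μ * t))) := by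
    apply setIntegral_congr_fun measurableSet_Ioc
    intro t ht
    simp only []
    rw [abs_of_nonpos (by linarith [ht.2] : t - c ≤ 0)]
    ring
  have h2 : ∫ t in Ioi c, |t - c| * Real.exp (-(μ * t)) =
      ∫ t in Ioi c, (t * Real.exp (-(μ * t)) - c * Real.exp (-(μ * t))) := by
    apply setIntegral_congr_fun measurableSet_Ioi
    intro t ht
    simp only []
    rw [abs_of_nonneg (by linarith [ht.out] : (0:ℝ) ≤ t - c)]
    ring
  rw [h1, h2]
  rw [integral_sub (((integrableOn_E hμ 0).mono_set Ioc_subset_Ioi_self).const_mul c)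
        ((integrableOn_tE hμ le_rfl).mono_set Ioc_subset_Ioi_self),
      integral_sub (integrableOn_tE hμ hc) ((integrableOn_E hμ c).const_mul c)]
  rw [MeasureTheory.integral_const_mul, MeasureTheory.integral_const_mul, integral_E_Ioc hμ hc, integral_tE_Ioc hμ hc,
      integral_E_Ioi hμ c, integral_tE_Ioi hμ hc]
  field_simp
  ring


variable {z : ℝ → ℝ}

lemma integrableOn_zE (hμ : 0 < μ) (hz : Measurable z) (hz1 : ∀ t, |z t| ≤ 1) :
    IntegrableOn (fun t : ℝ => z t * Real.exp (-(μ * t))) (Ioi 0) := by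
  apply Integrable.mono' (integrableOn_E hμ 0)
    ((hz.mul contE.measurable).aestronglyMeasurable)
  apply Filter.Eventually.of_forall
  intro t
  rw [Pi.mul_apply, Real.norm_eq_abs, abs_mul, abs_of_nonneg (Real.exp_nonneg _)]
  exact mul_le_of_le_one_left (Real.exp_nonneg _) (hz1 t)

lemma integrableOn_abs_mul_E (hμ : 0 < μ) :
    IntegrableOn (fun t : ℝ => |t| * Real.exp (-(μ * t))) (Ioi 0) :=
  (integrableOn_tE hμ le_rfl).congr_fun
    (fun t ht => by rw [abs_of_nonneg (le_of_lt ht)]) measurableSet_Ioi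

lemma integrableOn_ztE (hμ : 0 < μ) (hz : Measurable z) (hz1 : ∀ t, |z t| ≤ 1) :
    IntegrableOn (fun t : ℝ => z t * (t * Real.exp (-(μ * t)))) (Ioi 0) := by
  apply Integrable.mono' (integrableOn_abs_mul_E hμ)
    ((hz.mul (measurable_id.mul contE.measurable)).aestronglyMeasurable)
  apply Filter.Eventually.of_forall
  intro t
  rw [Pi.mul_apply, Pi.mul_apply, id_eq, Real.norm_eq_abs, abs_mul, abs_mul, abs_of_nonneg (Real.exp_nonneg _)]
  apply mul_le_of_le_one_left (by positivity) (hz1 t)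

lemma key_upper (hμ : 0 < μ) (hz : Measurable z) (hz1 : ∀ t, |z t| ≤ 1) {c : ℝ} (hc : 0 ≤ c) :
    (∫ t in Ioi 0, z t * (t * Real.exp (-(μ * t)))) -
      c * ∫ t in Ioi 0, z t * Real.exp (-(μ * t)) ≤
      c / μ - 1 / μ ^ 2 + 2 * Real.exp (-(μ * c)) / μ ^ 2 := by
  rw [← integral_absE hμ hc, ← MeasureTheory.integral_const_mul,
    ← integral_sub (integrableOn_ztE hμ hz hz1) ((integrableOn_zE hμ hz hz1).const_mul c)]
  apply setIntegral_mono_on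
  · exact (integrableOn_ztE hμ hz hz1).sub ((integrableOn_zE hμ hz hz1).const_mul c)
  · exact integrableOn_absE hμ c
  · exact measurableSet_Ioi
  · intro t _
    have h1 : z t * (t * Real.exp (-(μ * t))) - c * (z t * Real.exp (-(μ * t)))
        = z t * (t - c) * Real.exp (-(μ * t)) := by ring
    rw [h1]
    apply mul_le_mul_of_nonneg_right _ (Real.exp_nonneg _)
    calc z t * (t - c) ≤ |z t * (t - c)| := le_abs_self _
    _ = |z t| * |t - c| := abs_mul _ _
    _ ≤ 1 * |t - c| := mul_le_mul_of_nonneg_right (hz1 t) (abs_nonneg _)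
    _ = |t - c| := one_mul _

def zbb (c : ℝ) : ℝ → ℝ := fun t => if t ≤ c then (-1 : ℝ) else 1

lemma zbb_measurable (c : ℝ) : Measurable (zbb c) :=
  Measurable.ite (measurableSet_le measurable_id measurable_const) measurable_const
    measurable_const

lemma zbb_abs (c t : ℝ) : |zbb c t| ≤ 1 := by
  unfold zbb; split <;> simp

lemma integral_zbb_E (hμ : 0 < μ) {c : ℝ} (hc : 0 ≤ c) :
    ∫ t in Ioi 0, zbb c t * Real.exp (-(μ * t)) =
      (2 * Real.exp (-(μ * c)) - 1) / μ := by
  rw [split_Ioi hc (integrableOn_zE hμ (zbb_measurable c) (zbb_abs c))]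
  have h1 : ∫ t in Ioc 0 c, zbb c t * Real.exp (-(μ * t)) =
      ∫ t in Ioc 0 c, (-1 : ℝ) * Real.exp (-(μ * t)) := by
    apply setIntegral_congr_fun measurableSet_Ioc
    intro t ht
    simp only [zbb, if_pos ht.2]
  have h2 : ∫ t in Ioi c, zbb c t * Real.exp (-(μ * t)) =
      ∫ t in Ioi c, (1 : ℝ) * Real.exp (-(μ * t)) := by
    apply setIntegral_congr_fun measurableSet_Ioi
    intro t ht
    simp only [zbb, if_neg (not_le.mpr ht.out)]
  rw [h1, h2]
  simp only [one_mul, neg_one_mul]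
  rw [MeasureTheory.integral_neg, integral_E_Ioc hμ hc, integral_E_Ioi hμ c]
  field_simp
  ring

lemma integral_zbb_tE (hμ : 0 < μ) {c : ℝ} (hc : 0 ≤ c) :
    ∫ t in Ioi 0, zbb c t * (t * Real.exp (-(μ * t))) =
      -(1 / μ ^ 2) + (2 * c / μ + 2 / μ ^ 2) * Real.exp (-(μ * c)) := by
  rw [split_Ioi hc (integrableOn_ztE hμ (zbb_measurable c) (zbb_abs c))]
  have h1 : ∫ t in Ioc 0 c, zbb c t * (t * Real.exp (-(μ * t))) =
      ∫ t in Ioc 0 c, (-1 : ℝ) * (t * Real.exp (-(μ * t))) := by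
    apply setIntegral_congr_fun measurableSet_Ioc
    intro t ht
    simp only [zbb, if_pos ht.2]
  have h2 : ∫ t in Ioi c, zbb c t * (t * Real.exp (-(μ * t))) =
      ∫ t in Ioi c, (1 : ℝ) * (t * Real.exp (-(μ * t))) := by
    apply setIntegral_congr_fun measurableSet_Ioi
    intro t ht
    simp only [zbb, if_neg (not_le.mpr ht.out)]
  rw [h1, h2]
  simp only [one_mul, neg_one_mul]
  rw [MeasureTheory.integral_neg, integral_tE_Ioc hμ hc, integral_tE_Ioi hμ hc]
  field_simp
  ring


def wp (μ y : ℝ) : ℝ := (1 + μ * y) / 2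

def xm (μ y : ℝ) : ℝ := y / μ - (1 / μ + y) * Real.log (wp μ y) / μ

def Pa (μ y : ℝ) : ℝ := (2 / μ ^ 2) * (wp μ y * (wp μ y * Real.log (wp μ y))) - (1 / μ + y) ^ 2 / 4

def Ga (μ y : ℝ) : ℝ := -(Pa μ y - Pa μ (-y)) / μ

lemma continuous_wp : Continuous (wp μ) := by unfold wp; fun_prop

lemma continuous_logterm :
    Continuous (fun y : ℝ => wp μ y * Real.log (wp μ y)) :=
  Real.continuous_mul_log.comp continuous_wp

lemma continuous_Pa : Continuous (Pa μ) := by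
  unfold Pa
  exact (continuous_const.mul (continuous_wp.mul continuous_logterm)).sub (by fun_prop)

lemma continuous_Ga : Continuous (Ga μ) := by
  unfold Ga
  exact (((continuous_Pa).sub ((continuous_Pa).comp continuous_neg)).neg).div_const μ

lemma xm_eq (hμ : μ ≠ 0) (y : ℝ) :
    xm μ y = y / μ - (2 / μ ^ 2) * (wp μ y * Real.log (wp μ y)) := by
  unfold xm wp
  field_simp

lemma continuous_xm (hμ : μ ≠ 0) : Continuous (xm μ) := by
  have : xm μ = fun y => y / μ - (2 / μ ^ 2) * (wp μ y * Real.log (wp μ y)) :=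
    funext (xm_eq hμ)
  rw [this]
  exact (continuous_id.div_const μ).sub (continuous_const.mul continuous_logterm)

lemma hasDerivAt_wp (μ y : ℝ) : HasDerivAt (wp μ) (μ / 2) y := by
  unfold wp
  simpa using (((hasDerivAt_id y).const_mul μ).const_add 1).div_const 2

lemma hasDerivAt_Pa (hμ : 0 < μ) {y : ℝ} (hy : 0 < wp μ y) :
    HasDerivAt (Pa μ) ((1 / μ + y) * Real.log (wp μ y)) y := by
  have hP : Pa μ = fun y => (2 / μ ^ 2) * (wp μ y ^ 2 * Real.log (wp μ y)) - (1 / μ + y) ^ 2 / 4 :=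
    funext fun y => by unfold Pa; ring
  rw [hP]
  have hw := hasDerivAt_wp μ y
  have hlog : HasDerivAt (fun y => Real.log (wp μ y)) ((μ / 2) / wp μ y) y :=
    (Real.hasDerivAt_log (ne_of_gt hy)).comp y hw |>.congr_deriv (by ring)
  have hsq : HasDerivAt (fun y => wp μ y ^ 2) (2 * wp μ y * (μ / 2)) y := by
    simpa using (hw.fun_pow 2)
  have h1 : HasDerivAt (fun y => wp μ y ^ 2 * Real.log (wp μ y))
      (2 * wp μ y * (μ / 2) * Real.log (wp μ y) + wp μ y ^ 2 * ((μ / 2) / wp μ y)) y :=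
    hsq.mul hlog
  have h2 : HasDerivAt (fun y : ℝ => (1 / μ + y) ^ 2 / 4) ((1 / μ + y) / 2) y := by
    have h := (((hasDerivAt_id y).const_add (1 / μ)).pow 2).div_const 4
    exact h.congr_deriv (by simp only [id_eq]; push_cast; ring)
  have h3 := ((h1.const_mul ((2:ℝ) / μ ^ 2)).sub h2)
  apply h3.congr_deriv
  have hwne : wp μ y ≠ 0 := ne_of_gt hy
  have hwval : wp μ y = (1 + μ * y) / 2 := rfl
  field_simp
  ring_nf
  rw [hwval]
  field_simp
  ring

lemma hasDerivAt_Ga (hμ : 0 < μ) {y : ℝ} (hy1 : 0 < wp μ y) (hy2 : 0 < wp μ (-y)) :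
    HasDerivAt (Ga μ) (xm μ y + xm μ (-y)) y := by
  have h1 := hasDerivAt_Pa hμ hy1
  have h2 : HasDerivAt (fun y : ℝ => Pa μ (-y)) (-((1 / μ + -y) * Real.log (wp μ (-y)))) y := by
    have hneg : HasDerivAt (fun y : ℝ => -y) (-1 : ℝ) y := hasDerivAt_neg' y
    have := (hasDerivAt_Pa hμ hy2).comp y hneg
    simpa [mul_comm, Function.comp_def] using this
  have h3 := ((h1.sub h2).neg).div_const μ
  apply h3.congr_deriv
  unfold xm
  field_simp
  ring

lemma xm_add_nonneg (hμ : 0 < μ) {y : ℝ} (hy : y ∈ Icc (-(1/μ)) (1/μ)) :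
    0 ≤ xm μ y + xm μ (-y) := by
  have e1 : xm μ y + xm μ (-y) =
      -((1/μ + y) * Real.log (wp μ y)) / μ + -((1/μ + -y) * Real.log (wp μ (-y))) / μ := by
    unfold xm; ring
  rw [e1]
  have key : ∀ u : ℝ, u ∈ Icc (-(1/μ)) (1/μ) → 0 ≤ -((1/μ + u) * Real.log (wp μ u)) / μ := by
    intro u hu
    apply div_nonneg _ hμ.le
    rw [neg_nonneg]
    apply mul_nonpos_of_nonneg_of_nonpos
    · have := hu.1; linarith
    · apply Real.log_nonpos
      · unfold wp
        have h1 : μ * (-(1/μ)) ≤ μ * u := mul_le_mul_of_nonneg_left hu.1 hμ.le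
        have h2 : μ * (1/μ) = 1 := by field_simp
        nlinarith
      · unfold wp
        have : μ * u ≤ μ * (1/μ) := mul_le_mul_of_nonneg_left hu.2 hμ.le
        rw [mul_one_div, div_self (ne_of_gt hμ)] at this
        linarith
  have hy' : -y ∈ Icc (-(1/μ)) (1/μ) := ⟨by linarith [hy.2], by linarith [hy.1]⟩
  exact add_nonneg (key y hy) (key (-y) hy')

lemma area_integral (hμ : 0 < μ) :
    ∫ y in (-(1/μ))..(1/μ), (xm μ y + xm μ (-y)) = 2 / μ ^ 3 := by
  have hab : -(1/μ) ≤ 1/μ := by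
    have : 0 ≤ 1/μ := by positivity
    linarith
  have hint : IntervalIntegrable (fun y => xm μ y + xm μ (-y)) volume (-(1/μ)) (1/μ) :=
    ((continuous_xm (ne_of_gt hμ)).add ((continuous_xm (ne_of_gt hμ)).comp continuous_neg)).intervalIntegrable _ _
  have hderiv : ∀ y ∈ Ioo (-(1/μ)) (1/μ), HasDerivAt (Ga μ) (xm μ y + xm μ (-y)) y := by
    intro y hy
    apply hasDerivAt_Ga hμ
    · unfold wp
      have h1 : μ * (-(1/μ)) < μ * y := mul_lt_mul_of_pos_left hy.1 hμ
      have h2 : μ * (1/μ) = 1 := by field_simp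
      nlinarith
    · unfold wp
      have h1 : μ * y < μ * (1/μ) := mul_lt_mul_of_pos_left hy.2 hμ
      have h2 : μ * (1/μ) = 1 := by field_simp
      nlinarith
  rw [intervalIntegral.integral_eq_sub_of_hasDerivAt_of_le hab
    (continuous_Ga.continuousOn) hderiv hint]
  have hwp1 : wp μ (1/μ) = 1 := by unfold wp; field_simp; norm_num
  have hwp0 : wp μ (-(1/μ)) = 0 := by unfold wp; field_simp; norm_num
  have hPa1 : Pa μ (1/μ) = -(1/μ^2) := by
    unfold Pa
    rw [hwp1]
    simp [Real.log_one]
    field_simp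
    ring
  have hPa0 : Pa μ (-(1/μ)) = 0 := by
    unfold Pa
    rw [hwp0]
    simp [Real.log_zero]
  unfold Ga
  rw [neg_neg, hPa1, hPa0]
  field_simp
  ring


lemma wp_pos_of_mem (hμ : 0 < μ) {y : ℝ} (hy : y ∈ Ioo (-(1/μ)) (1/μ)) : 0 < wp μ y := by
  unfold wp
  have h1 : μ * (-(1/μ)) < μ * y := mul_lt_mul_of_pos_left hy.1 hμ
  have h2 : μ * (1/μ) = 1 := by field_simp
  nlinarith

lemma wp_lt_one_of_mem (hμ : 0 < μ) {y : ℝ} (hy : y ∈ Ioo (-(1/μ)) (1/μ)) : wp μ y < 1 := by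
  unfold wp
  have h1 : μ * y < μ * (1/μ) := mul_lt_mul_of_pos_left hy.2 hμ
  have h2 : μ * (1/μ) = 1 := by field_simp
  nlinarith

/-- properties of the switching time. -/
lemma c_spec (hμ : 0 < μ) {y : ℝ} (hy : y ∈ Ioo (-(1/μ)) (1/μ)) :
    0 ≤ -(Real.log (wp μ y)) / μ ∧
      Real.exp (-(μ * (-(Real.log (wp μ y)) / μ))) = wp μ y := by
  constructor
  · apply div_nonneg _ hμ.le
    rw [neg_nonneg]
    exact Real.log_nonpos (wp_pos_of_mem hμ hy).le (wp_lt_one_of_mem hμ hy).le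
  · rw [show -(μ * (-(Real.log (wp μ y)) / μ)) = Real.log (wp μ y) by field_simp]
    exact Real.exp_log (wp_pos_of_mem hμ hy)

lemma key_upper_xm (hμ : 0 < μ) (hz : Measurable z) (hz1 : ∀ t, |z t| ≤ 1)
    (hy : (∫ t in Ioi 0, z t * Real.exp (-(μ * t))) ∈ Ioo (-(1/μ)) (1/μ)) :
    ∫ t in Ioi 0, z t * (t * Real.exp (-(μ * t))) ≤
      xm μ (∫ t in Ioi 0, z t * Real.exp (-(μ * t))) := by
  set y := ∫ t in Ioi 0, z t * Real.exp (-(μ * t)) with hy_def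
  obtain ⟨hc0, hce⟩ := c_spec hμ hy
  set c := -(Real.log (wp μ y)) / μ with hc_def
  have h := key_upper hμ hz hz1 hc0
  rw [hce] at h
  have hlog : Real.log (wp μ y) = -(μ * c) := by rw [hc_def]; field_simp
  have hwy : wp μ y = (1 + μ * y)/2 := rfl
  have hxm : xm μ y = c/μ - 1/μ^2 + 2 * wp μ y / μ^2 + c * y := by
    unfold xm
    rw [hlog, hwy]
    field_simp
    ring
  rw [hxm]
  linarith

lemma key_lower_xm (hμ : 0 < μ) (hz : Measurable z) (hz1 : ∀ t, |z t| ≤ 1)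
    (hy : (∫ t in Ioi 0, z t * Real.exp (-(μ * t))) ∈ Ioo (-(1/μ)) (1/μ)) :
    -xm μ (-(∫ t in Ioi 0, z t * Real.exp (-(μ * t)))) ≤
      ∫ t in Ioi 0, z t * (t * Real.exp (-(μ * t))) := by
  have hz' : Measurable (fun t => -z t) := hz.neg
  have hz1' : ∀ t, |(-z t : ℝ)| ≤ 1 := fun t => by rw [abs_neg]; exact hz1 t
  have hIE : ∫ t in Ioi 0, (-z t) * Real.exp (-(μ * t)) =
      -(∫ t in Ioi 0, z t * Real.exp (-(μ * t))) := by
    rw [← MeasureTheory.integral_neg]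
    congr 1 with t
    ring
  have hIt : ∫ t in Ioi 0, (-z t) * (t * Real.exp (-(μ * t))) =
      -(∫ t in Ioi 0, z t * (t * Real.exp (-(μ * t)))) := by
    rw [← MeasureTheory.integral_neg]
    congr 1 with t
    ring
  have h := key_upper_xm hμ hz' hz1' (by
    rw [hIE]
    exact ⟨by linarith [hy.2], by linarith [hy.1]⟩)
  rw [hIE, hIt] at h
  linarith

lemma bang_hits (hμ : 0 < μ) {y : ℝ} (hy : y ∈ Ioo (-(1/μ)) (1/μ)) :
    ∃ z : ℝ → ℝ, Measurable z ∧ (∀ t, |z t| ≤ 1) ∧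
      (∫ t in Ioi 0, z t * Real.exp (-(μ * t))) = y ∧
      (∫ t in Ioi 0, z t * (t * Real.exp (-(μ * t)))) = xm μ y := by
  obtain ⟨hc0, hce⟩ := c_spec hμ hy
  set c := -(Real.log (wp μ y)) / μ with hc_def
  refine ⟨zbb c, zbb_measurable c, zbb_abs c, ?_, ?_⟩
  · rw [integral_zbb_E hμ hc0, hce]
    unfold wp
    field_simp
    ring
  · rw [integral_zbb_tE hμ hc0, hce]
    have hlog : Real.log (wp μ y) = -(μ * c) := by rw [hc_def]; field_simp
    have hwy : wp μ y = (1 + μ * y)/2 := rfl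
    unfold xm
    rw [hlog, hwy]
    field_simp
    ring

lemma bang_hits_neg (hμ : 0 < μ) {y : ℝ} (hy : y ∈ Ioo (-(1/μ)) (1/μ)) :
    ∃ z : ℝ → ℝ, Measurable z ∧ (∀ t, |z t| ≤ 1) ∧
      (∫ t in Ioi 0, z t * Real.exp (-(μ * t))) = y ∧
      (∫ t in Ioi 0, z t * (t * Real.exp (-(μ * t)))) = -xm μ (-y) := by
  have hy' : -y ∈ Ioo (-(1/μ)) (1/μ) := ⟨by linarith [hy.2], by linarith [hy.1]⟩
  obtain ⟨z, hz, hz1, hI1, hI2⟩ := bang_hits hμ hy'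
  refine ⟨fun t => -z t, hz.neg, fun t => by rw [abs_neg]; exact hz1 t, ?_, ?_⟩
  · rw [show (fun t => -z t * Real.exp (-(μ * t))) = fun t => -(z t * Real.exp (-(μ * t)))
      from funext fun t => by ring] at *
    rw [MeasureTheory.integral_neg, hI1, neg_neg]
  · rw [show (fun t => -z t * (t * Real.exp (-(μ * t)))) = fun t => -(z t * (t * Real.exp (-(μ * t))))
      from funext fun t => by ring]
    rw [MeasureTheory.integral_neg, hI2]

lemma y_abs_le (hμ : 0 < μ) (hz : Measurable z) (hz1 : ∀ t, |z t| ≤ 1) :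
    |∫ t in Ioi 0, z t * Real.exp (-(μ * t))| ≤ 1/μ := by
  have h1 : |∫ t in Ioi 0, z t * Real.exp (-(μ * t))| ≤
      ∫ t in Ioi 0, |z t| * Real.exp (-(μ * t)) := by
    simpa [Real.norm_eq_abs, abs_mul, Real.abs_exp] using
      MeasureTheory.norm_integral_le_integral_norm (μ := volume.restrict (Ioi 0))
        (fun t => z t * Real.exp (-(μ * t)))
  have h2 : ∫ t in Ioi 0, |z t| * Real.exp (-(μ * t)) ≤ ∫ t in Ioi 0, Real.exp (-(μ * t)) := by
    apply integral_mono ?_ (integrableOn_E hμ 0) ?_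
    · have := (integrableOn_zE hμ hz hz1).abs
      simpa [abs_mul, Real.abs_exp] using this
    · intro t
      exact mul_le_of_le_one_left (Real.exp_nonneg _) (hz1 t)
  rw [integral_E_Ioi hμ 0] at h2
  simp only [mul_zero, neg_zero, Real.exp_zero] at h2
  linarith


lemma graph_null {f : ℝ → ℝ} (hf : Measurable f) :
    volume {p : ℝ × ℝ | p.2 = f p.1} = 0 := by
  rw [MeasureTheory.Measure.volume_eq_prod, MeasureTheory.Measure.prod_apply
    (measurableSet_graph hf)]
  have : ∀ x : ℝ, volume (Prod.mk x ⁻¹' {p : ℝ × ℝ | p.2 = f p.1}) = 0 := by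
    intro x
    have : Prod.mk x ⁻¹' {p : ℝ × ℝ | p.2 = f p.1} = {f x} := by
      ext y; simp
    rw [this]
    exact Real.volume_singleton
  simp only [this]
  simp

lemma vline_null (a : ℝ) : volume {p : ℝ × ℝ | p.1 = a} = 0 := by
  have : {p : ℝ × ℝ | p.1 = a} = ({a} : Set ℝ) ×ˢ (univ : Set ℝ) := by
    ext p; simp only [mem_setOf_eq, mem_prod, mem_singleton_iff, mem_univ, and_true]
  rw [this, MeasureTheory.Measure.volume_eq_prod, MeasureTheory.Measure.prod_prod]
  simp


lemma integral_pair {c0 c1 : ℝ → ℝ} (h0 : IntegrableOn c0 (Ioi 0)) (h1 : IntegrableOn c1 (Ioi 0)) :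
    (∫ t in Ioi 0, (![c0 t, c1 t] : Fin 2 → ℝ)) =
      ![∫ t in Ioi 0, c0 t, ∫ t in Ioi 0, c1 t] := by
  have hrep : (fun t => (![c0 t, c1 t] : Fin 2 → ℝ)) =
      fun t => c0 t • (![1,0] : Fin 2 → ℝ) + c1 t • (![0,1] : Fin 2 → ℝ) := by
    funext t i; fin_cases i <;> simp
  rw [hrep, integral_add (h0.smul_const _) (h1.smul_const _),
    integral_smul_const, integral_smul_const]
  funext i; fin_cases i <;> simp

end

end Reach2

theorem volume_reachInf_jordan2 (l : ℝ) (hl : l < 0) (b₁ : ℝ) :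
    volume (reachInf (jordanBlock 2 l) ![b₁, 1]) = ENNReal.ofReal (4 / (2 * |l| ^ 3)) := by
  classical
  open Reach2 in
  set μ : ℝ := -l with hμdef
  have hμ : 0 < μ := by simp [hμdef]; linarith
  have hlt : ∀ t : ℝ, l * t = -(μ * t) := fun t => by rw [hμdef]; ring
  -- membership characterization
  have hmem : ∀ x : Fin 2 → ℝ, x ∈ reachInf (jordanBlock 2 l) ![b₁, 1] ↔
      ∃ z : ℝ → ℝ, Measurable z ∧ (∀ t, |z t| ≤ 1) ∧
        x = ∫ t in Ioi (0:ℝ),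
          (![z t * ((b₁ + t) * Real.exp (-(μ * t))), z t * Real.exp (-(μ * t))] : Fin 2 → ℝ) := by
    intro x
    unfold reachInf
    simp only [mem_setOf_eq]
    constructor
    · rintro ⟨z, hz, hz1, rfl⟩
      refine ⟨z, hz, hz1, ?_⟩
      congr 1
      funext t
      rw [integrand_eq l b₁ t (z t), hlt]
    · rintro ⟨z, hz, hz1, rfl⟩
      refine ⟨z, hz, hz1, ?_⟩
      congr 1
      funext t
      rw [integrand_eq l b₁ t (z t), hlt]
  -- component integrability and values for admissible controls
  have hc0int : ∀ z : ℝ → ℝ, Measurable z → (∀ t, |z t| ≤ 1) →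
      IntegrableOn (fun t => z t * ((b₁ + t) * Real.exp (-(μ * t)))) (Ioi 0) := by
    intro z hz hz1
    have : (fun t => z t * ((b₁ + t) * Real.exp (-(μ * t)))) =
        fun t => b₁ * (z t * Real.exp (-(μ * t))) + z t * (t * Real.exp (-(μ * t))) :=
      funext fun t => by ring
    rw [this]
    exact ((integrableOn_zE hμ hz hz1).const_mul b₁).add (integrableOn_ztE hμ hz hz1)
  have hc0val : ∀ z : ℝ → ℝ, Measurable z → (∀ t, |z t| ≤ 1) →
      (∫ t in Ioi 0, z t * ((b₁ + t) * Real.exp (-(μ * t)))) =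
        b₁ * (∫ t in Ioi 0, z t * Real.exp (-(μ * t))) +
          ∫ t in Ioi 0, z t * (t * Real.exp (-(μ * t))) := by
    intro z hz hz1
    have h : (fun t => z t * ((b₁ + t) * Real.exp (-(μ * t)))) =
        fun t => b₁ * (z t * Real.exp (-(μ * t))) + z t * (t * Real.exp (-(μ * t))) :=
      funext fun t => by ring
    rw [h, integral_add ((integrableOn_zE hμ hz hz1).const_mul b₁) (integrableOn_ztE hμ hz hz1),
      MeasureTheory.integral_const_mul]
  -- region data
  set fL : ℝ → ℝ := fun y => b₁ * y - xm μ (-y) with hfL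
  set gU : ℝ → ℝ := fun y => b₁ * y + xm μ y with hgU
  set s : Set ℝ := Ioo (-(1/μ)) (1/μ) with hs
  have hcontxm : Continuous (xm μ) := continuous_xm (ne_of_gt hμ)
  have hcontfL : Continuous fL := by
    rw [hfL]; exact (continuous_const.mul continuous_id).sub (hcontxm.comp continuous_neg)
  have hcontgU : Continuous gU := by
    rw [hgU]; exact (continuous_const.mul continuous_id).add hcontxm
  have hfg : ∀ y ∈ s, fL y ≤ gU y := by
    intro y hy
    have := xm_add_nonneg hμ (Ioo_subset_Icc_self hy)
    simp only [hfL, hgU]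
    linarith
  -- the measurable equivalence
  set e : (Fin 2 → ℝ) ≃ᵐ (ℝ × ℝ) :=
    (MeasurableEquiv.finTwoArrow).trans MeasurableEquiv.prodComm with he
  have hswap : MeasurePreserving (Prod.swap : ℝ × ℝ → ℝ × ℝ) volume volume := by
    have h : MeasurePreserving (Prod.swap : ℝ × ℝ → ℝ × ℝ)
        ((volume : Measure ℝ).prod (volume : Measure ℝ))
        ((volume : Measure ℝ).prod (volume : Measure ℝ)) :=
      MeasureTheory.Measure.measurePreserving_swap
    rwa [← MeasureTheory.Measure.volume_eq_prod] at h
  have hmp : MeasurePreserving (⇑e) volume volume := by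
    have h1 := MeasureTheory.volume_preserving_finTwoArrow ℝ
    have := hswap.comp h1
    convert this using 1
    rfl
  have hecoord : ∀ x : Fin 2 → ℝ, e x = (x 1, x 0) := fun x => rfl
  -- upper containment
  have hupper : reachInf (jordanBlock 2 l) ![b₁, 1] ⊆
      e ⁻¹' ({p : ℝ × ℝ | p.1 ∈ s ∧ p.2 ∈ Icc (fL p.1) (gU p.1)} ∪
        ({p : ℝ × ℝ | p.1 = 1/μ} ∪ {p : ℝ × ℝ | p.1 = -(1/μ)})) := by
    intro x hx
    obtain ⟨z, hz, hz1, rfl⟩ := (hmem x).mp hx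
    rw [mem_preimage, hecoord]
    rw [Reach2.integral_pair (hc0int z hz hz1) (integrableOn_zE hμ hz hz1)]
    simp only [Matrix.cons_val_one, Matrix.head_cons, Matrix.cons_val_zero, mem_union,
      mem_setOf_eq, mem_Icc]
    rcases eq_or_lt_of_le (y_abs_le hμ hz hz1) with heq | hlt2
    · right
      rcases (abs_eq (by positivity : (0:ℝ) ≤ 1/μ)).mp heq with h | h
      · left; exact h
      · right; exact h
    · left
      have habs2 := abs_lt.mp hlt2
      have hYmem : (∫ t in Ioi 0, z t * Real.exp (-(μ * t))) ∈ s := ⟨habs2.1, habs2.2⟩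
      have hlow := key_lower_xm hμ hz hz1 hYmem
      have hup := key_upper_xm hμ hz hz1 hYmem
      have hval := hc0val z hz hz1
      refine ⟨hYmem, ?_, ?_⟩
      · simp only [hfL]
        rw [hval]
        linarith
      · simp only [hgU]
        rw [hval]
        linarith
  -- lower containment
  have hlower : e ⁻¹' (regionBetween fL gU s) ⊆ reachInf (jordanBlock 2 l) ![b₁, 1] := by
    intro x hx
    rw [mem_preimage, hecoord] at hx
    obtain ⟨hy, hx0⟩ := hx
    set y := x 1 with hydef
    obtain ⟨zp, hzp, hzp1, hzpE, hzptE⟩ := bang_hits hμ hy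
    obtain ⟨zm, hzm, hzm1, hzmE, hzmtE⟩ := bang_hits_neg hμ hy
    have hfge : gU y - fL y = xm μ y + xm μ (-y) := by simp only [hfL, hgU]; ring
    have hWpos : 0 < gU y - fL y := by
      have := hx0.1
      have := hx0.2
      simp only [hydef] at *
      linarith
    set θ := (x 0 - fL y) / (gU y - fL y) with hθ
    have hθ0 : 0 ≤ θ := div_nonneg (by have := hx0.1; simp only [hydef] at *; linarith) hWpos.le
    have hθ1 : θ ≤ 1 := (div_le_one hWpos).mpr (by have := hx0.2; simp only [hydef] at *; linarith)
    set zc : ℝ → ℝ := fun t => θ * zp t + (1 - θ) * zm t with hzcdef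
    have hzc : Measurable zc := (hzp.const_mul θ).add (hzm.const_mul (1 - θ))
    have hzc1 : ∀ t, |zc t| ≤ 1 := by
      intro t
      calc |zc t| ≤ |θ * zp t| + |(1 - θ) * zm t| := abs_add_le _ _
      _ = θ * |zp t| + (1 - θ) * |zm t| := by
          rw [abs_mul, abs_mul, abs_of_nonneg hθ0, abs_of_nonneg (show (0:ℝ) ≤ 1 - θ by linarith)]
      _ ≤ θ * 1 + (1 - θ) * 1 :=
          add_le_add (mul_le_mul_of_nonneg_left (hzp1 t) hθ0)
            (mul_le_mul_of_nonneg_left (hzm1 t) (by linarith))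
      _ = 1 := by ring
    have hEzc : ∫ t in Ioi 0, zc t * Real.exp (-(μ * t)) = y := by
      have hsplit : (fun t => zc t * Real.exp (-(μ * t))) =
          fun t => θ * (zp t * Real.exp (-(μ * t))) + (1 - θ) * (zm t * Real.exp (-(μ * t))) :=
        funext fun t => by simp only [hzcdef]; ring
      rw [hsplit, integral_add ((integrableOn_zE hμ hzp hzp1).const_mul θ)
        ((integrableOn_zE hμ hzm hzm1).const_mul (1 - θ)),
        MeasureTheory.integral_const_mul, MeasureTheory.integral_const_mul, hzpE, hzmE]
      ring
    have htzc : ∫ t in Ioi 0, zc t * (t * Real.exp (-(μ * t))) =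
        θ * xm μ y + (1 - θ) * (-xm μ (-y)) := by
      have hsplit : (fun t => zc t * (t * Real.exp (-(μ * t)))) =
          fun t => θ * (zp t * (t * Real.exp (-(μ * t)))) +
            (1 - θ) * (zm t * (t * Real.exp (-(μ * t)))) :=
        funext fun t => by simp only [hzcdef]; ring
      rw [hsplit, integral_add ((integrableOn_ztE hμ hzp hzp1).const_mul θ)
        ((integrableOn_ztE hμ hzm hzm1).const_mul (1 - θ)),
        MeasureTheory.integral_const_mul, MeasureTheory.integral_const_mul, hzptE, hzmtE]
    refine (hmem x).mpr ⟨zc, hzc, hzc1, ?_⟩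
    rw [Reach2.integral_pair (hc0int zc hzc hzc1) (integrableOn_zE hμ hzc hzc1)]
    have hθspec : θ * (gU y - fL y) = x 0 - fL y := by
      rw [hθ]
      exact div_mul_cancel₀ (x 0 - fL y) (ne_of_gt hWpos)
    clear_value θ
    funext i
    fin_cases i
    · show x 0 = _
      simp only [Fin.zero_eta, Fin.isValue, Matrix.cons_val_zero]
      rw [hc0val zc hzc hzc1, hEzc, htzc]
      have hx0eq : x 0 = fL y + θ * (gU y - fL y) := by linarith [hθspec]
      rw [hx0eq, hfge]
      simp only [hfL, hgU]
      ring
    · show x 1 = _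
      simp only [Fin.mk_one, Fin.isValue, Matrix.cons_val_one, Matrix.head_cons]
      rw [hEzc]
      rfl
  -- volume computations
  have hab : -(1/μ) ≤ 1/μ := by
    have : (0:ℝ) ≤ 1/μ := by positivity
    linarith
  have hregvol : (volume : Measure (ℝ × ℝ)) (regionBetween fL gU s) =
      ENNReal.ofReal (2/μ^3) := by
    rw [MeasureTheory.Measure.volume_eq_prod,
      volume_regionBetween_eq_integral
        ((hcontfL.integrableOn_Icc).mono_set (hs ▸ Ioo_subset_Icc_self))
        ((hcontgU.integrableOn_Icc).mono_set (hs ▸ Ioo_subset_Icc_self))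
        (hs ▸ measurableSet_Ioo) hfg]
    congr 1
    have h1 : ∫ y in s, (gU - fL) y = ∫ y in s, (xm μ y + xm μ (-y)) := by
      apply setIntegral_congr_fun (hs ▸ measurableSet_Ioo)
      intro y _
      simp only [Pi.sub_apply, hfL, hgU]
      ring
    rw [h1, hs, ← MeasureTheory.integral_Ioc_eq_integral_Ioo,
      ← intervalIntegral.integral_of_le hab, area_integral hμ]
  have hUccvol : (volume : Measure (ℝ × ℝ))
      ({p : ℝ × ℝ | p.1 ∈ s ∧ p.2 ∈ Icc (fL p.1) (gU p.1)} ∪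
        ({p : ℝ × ℝ | p.1 = 1/μ} ∪ {p : ℝ × ℝ | p.1 = -(1/μ)})) ≤
      ENNReal.ofReal (2/μ^3) := by
    have hsub : {p : ℝ × ℝ | p.1 ∈ s ∧ p.2 ∈ Icc (fL p.1) (gU p.1)} ⊆
        regionBetween fL gU s ∪
          ({p : ℝ × ℝ | p.2 = fL p.1} ∪ {p : ℝ × ℝ | p.2 = gU p.1}) := by
      rintro p ⟨hp1, hp2⟩
      rcases eq_or_lt_of_le hp2.1 with h | h
      · exact Or.inr (Or.inl h.symm)
      rcases eq_or_lt_of_le hp2.2 with h' | h'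
      · exact Or.inr (Or.inr h')
      · exact Or.inl ⟨hp1, h, h'⟩
    calc (volume : Measure (ℝ × ℝ)) _ ≤
        volume ({p : ℝ × ℝ | p.1 ∈ s ∧ p.2 ∈ Icc (fL p.1) (gU p.1)}) +
          (volume {p : ℝ × ℝ | p.1 = 1/μ} + volume {p : ℝ × ℝ | p.1 = -(1/μ)}) :=
        le_trans (measure_union_le _ _) (by gcongr; exact measure_union_le _ _)
    _ ≤ (volume (regionBetween fL gU s) +
          (volume {p : ℝ × ℝ | p.2 = fL p.1} + volume {p : ℝ × ℝ | p.2 = gU p.1})) + (0 + 0) := by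
        gcongr
        · exact le_trans (measure_mono hsub)
            (le_trans (measure_union_le _ _) (by gcongr; exact measure_union_le _ _))
        · exact le_of_eq (vline_null _)
        · exact le_of_eq (vline_null _)
    _ = volume (regionBetween fL gU s) := by
        rw [graph_null hcontfL.measurable, graph_null hcontgU.measurable]
        simp
    _ = ENNReal.ofReal (2/μ^3) := hregvol
  have h43 : ENNReal.ofReal (2/μ^3) = ENNReal.ofReal (4 / (2 * |l| ^ 3)) := by
    congr 1
    rw [abs_of_neg hl, ← hμdef, div_eq_div_iff (by positivity) (by positivity)]
    ring
  rw [← h43]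
  apply le_antisymm
  · calc volume (reachInf (jordanBlock 2 l) ![b₁, 1]) ≤
        volume (e ⁻¹' ({p : ℝ × ℝ | p.1 ∈ s ∧ p.2 ∈ Icc (fL p.1) (gU p.1)} ∪
          ({p : ℝ × ℝ | p.1 = 1/μ} ∪ {p : ℝ × ℝ | p.1 = -(1/μ)}))) := measure_mono hupper
    _ = volume ({p : ℝ × ℝ | p.1 ∈ s ∧ p.2 ∈ Icc (fL p.1) (gU p.1)} ∪
          ({p : ℝ × ℝ | p.1 = 1/μ} ∪ {p : ℝ × ℝ | p.1 = -(1/μ)})) :=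
        hmp.measure_preimage_equiv _
    _ ≤ ENNReal.ofReal (2/μ^3) := hUccvol
  · calc ENNReal.ofReal (2/μ^3) = volume (regionBetween fL gU s) := hregvol.symm
    _ = volume (e ⁻¹' regionBetween fL gU s) := (hmp.measure_preimage_equiv _).symm
    _ ≤ volume (reachInf (jordanBlock 2 l) ![b₁, 1]) := measure_mono hlower
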